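/- arXiv:2208.07705 — 6 statements merged into one kernel-verified Lean document; each statement's English description precedes it below -/
import Mathlib

section
/- In the Grid-4 patch setting, for every affine function u : ℝ² → ℝ (u(x,y) = ax + by + c) the Kuzmin limiter quantities computed from the nodal values u_P = u(P) satisfy P_A^+ ≤ Q_A^+, P_A^- ≥ Q_A^-, P_B^+ ≤ ((2h − 3ε)/(h − 3ε)) Q_B^+, and P_B^- ≥ ((2h − 3ε)/(h − 3ε)) Q_B^-. Moreover, the latter two inequalities are sharp: for the affine function u(x,y) = 1 − x/h (so that u_A = u_B = 0 and u_G = 1) one has P_B^+ = ((2h − 3ε)/(h − 3ε)) Q_B^+, and for u(x,y) = x/h − 1 one has P_B^- = ((2h − 3ε)/(h − 3ε)) Q_B^-. -/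
noncomputable section

/-! Grid-4 patch setting: nodes `A=(h,2h)`, `B=(h,h)`, `C=(2h,2h)`, `D=(h,3h)`, `E=(0,3h)`,
`F=(0,2h)`, `G=(0,h)`, `H=(h,0)`, `I=(2h,0)`, `J=(2h,h)`, artificial diffusion coefficients
`d_{AB}=d_{AD}=ε−h/6`, `d_{AC}=d_{AF}=ε−h/3`, `d_{AE}=d_{AG}=−h/6`, `d_{BA}=d_{BH}=ε−h/6`,
`d_{BG}=d_{BJ}=ε−h/3`, `d_{BI}=d_{BC}=−h/6`, fluxes `f_{AP}=d_{AP}(u_P−u_A)`,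
`f_{BP}=d_{BP}(u_P−u_B)`, and the Kuzmin limiter quantities `P^±`, `Q^±` at `A` and `B`. -/

/-- `P_A^+ = f_{AB}^+ + f_{AC}^+ + f_{AD}^+`. -/
def PAp (h ε uA uB uC uD : ℝ) : ℝ :=
  max ((ε - h / 6) * (uB - uA)) 0 + max ((ε - h / 3) * (uC - uA)) 0 +
    max ((ε - h / 6) * (uD - uA)) 0

/-- `P_A^- = f_{AB}^- + f_{AC}^- + f_{AD}^-`. -/
def PAm (h ε uA uB uC uD : ℝ) : ℝ :=
  min ((ε - h / 6) * (uB - uA)) 0 + min ((ε - h / 3) * (uC - uA)) 0 +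
    min ((ε - h / 6) * (uD - uA)) 0

/-- `Q_A^+ = -∑_{P ∈ S_A} f_{AP}^-`. -/
def QAp (h ε uA uB uC uD uE uF uG : ℝ) : ℝ :=
  -(min ((ε - h / 6) * (uB - uA)) 0 + min ((ε - h / 3) * (uC - uA)) 0 +
    min ((ε - h / 6) * (uD - uA)) 0 + min (-(h / 6) * (uE - uA)) 0 +
    min ((ε - h / 3) * (uF - uA)) 0 + min (-(h / 6) * (uG - uA)) 0)

/-- `Q_A^- = -∑_{P ∈ S_A} f_{AP}^+`. -/
def QAm (h ε uA uB uC uD uE uF uG : ℝ) : ℝ :=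
  -(max ((ε - h / 6) * (uB - uA)) 0 + max ((ε - h / 3) * (uC - uA)) 0 +
    max ((ε - h / 6) * (uD - uA)) 0 + max (-(h / 6) * (uE - uA)) 0 +
    max ((ε - h / 3) * (uF - uA)) 0 + max (-(h / 6) * (uG - uA)) 0)

/-- `P_B^+ = f_{BI}^+ + f_{BJ}^+ + f_{BC}^+`. -/
def PBp (h ε uB uC uI uJ : ℝ) : ℝ :=
  max (-(h / 6) * (uI - uB)) 0 + max ((ε - h / 3) * (uJ - uB)) 0 +
    max (-(h / 6) * (uC - uB)) 0

/-- `P_B^- = f_{BI}^- + f_{BJ}^- + f_{BC}^-`. -/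
def PBm (h ε uB uC uI uJ : ℝ) : ℝ :=
  min (-(h / 6) * (uI - uB)) 0 + min ((ε - h / 3) * (uJ - uB)) 0 +
    min (-(h / 6) * (uC - uB)) 0

/-- `Q_B^+ = -∑_{P ∈ S_B} f_{BP}^-`. -/
def QBp (h ε uA uB uC uG uH uI uJ : ℝ) : ℝ :=
  -(min ((ε - h / 6) * (uA - uB)) 0 + min (-(h / 6) * (uC - uB)) 0 +
    min ((ε - h / 3) * (uG - uB)) 0 + min ((ε - h / 6) * (uH - uB)) 0 +
    min (-(h / 6) * (uI - uB)) 0 + min ((ε - h / 3) * (uJ - uB)) 0)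

/-- `Q_B^- = -∑_{P ∈ S_B} f_{BP}^+`. -/
def QBm (h ε uA uB uC uG uH uI uJ : ℝ) : ℝ :=
  -(max ((ε - h / 6) * (uA - uB)) 0 + max (-(h / 6) * (uC - uB)) 0 +
    max ((ε - h / 3) * (uG - uB)) 0 + max ((ε - h / 6) * (uH - uB)) 0 +
    max (-(h / 6) * (uI - uB)) 0 + max ((ε - h / 3) * (uJ - uB)) 0)

/-! For an affine `u`, the node `A` is the midpoint of `B, D` and of `C, F`, and the edges of
each pair carry the same coefficient, so their fluxes are opposite: every positive flux counted
in `P_A^+` reappears, negated, as a negative flux in `Q_A^+`. At `B` the pairs `(A, H)` and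
`(G, J)` cancel in the same way, while `C` and `I` are symmetric about `J`, so
`f_BC + f_BI = (k - 1) f_BJ` with `k = (2h - 3ε)/(h - 3ε) ≥ 1`. This makes `k Q_B^+ - P_B^+` a
sum of nonnegative terms, all of which vanish when `u` depends on `x` only and decreases.
The bounds for `P^-`, `Q^-` are those for `P^+`, `Q^+` applied to `-u`. -/

lemma max_mul_neg_sub_neg_zero (d x y : ℝ) : max (d * (-x - -y)) 0 = -min (d * (x - y)) 0 := by
  rw [neg_sub_neg, ← neg_sub, mul_neg, ← neg_zero, max_neg_neg, neg_zero]

lemma min_mul_neg_sub_neg_zero (d x y : ℝ) : min (d * (-x - -y)) 0 = -max (d * (x - y)) 0 := by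
  rw [neg_sub_neg, ← neg_sub, mul_neg, ← neg_zero, min_neg_neg, neg_zero]

lemma PAm_eq_neg_PAp_neg (h ε uA uB uC uD : ℝ) :
    PAm h ε uA uB uC uD = -PAp h ε (-uA) (-uB) (-uC) (-uD) := by
  simp only [PAm, PAp, max_mul_neg_sub_neg_zero]
  ring

lemma QAm_eq_neg_QAp_neg (h ε uA uB uC uD uE uF uG : ℝ) :
    QAm h ε uA uB uC uD uE uF uG = -QAp h ε (-uA) (-uB) (-uC) (-uD) (-uE) (-uF) (-uG) := by
  simp only [QAm, QAp, min_mul_neg_sub_neg_zero]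
  ring

lemma PBm_eq_neg_PBp_neg (h ε uB uC uI uJ : ℝ) :
    PBm h ε uB uC uI uJ = -PBp h ε (-uB) (-uC) (-uI) (-uJ) := by
  simp only [PBm, PBp, max_mul_neg_sub_neg_zero]
  ring

lemma QBm_eq_neg_QBp_neg (h ε uA uB uC uG uH uI uJ : ℝ) :
    QBm h ε uA uB uC uG uH uI uJ = -QBp h ε (-uA) (-uB) (-uC) (-uG) (-uH) (-uI) (-uJ) := by
  simp only [QBm, QBp, min_mul_neg_sub_neg_zero]
  ring

lemma max_add_max_add_max_neg_le (x y z w : ℝ) :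
    max x 0 + max y 0 + max (-x) 0 ≤
      -(min x 0 + min y 0 + min (-x) 0 + min z 0 + min (-y) 0 + min w 0) := by
  have hx := min_neg_neg x 0
  have hx' := max_neg_neg x 0
  have hy := min_neg_neg y 0
  rw [neg_zero] at hx hx' hy
  linarith [min_le_right y 0, min_le_right z 0, min_le_right w 0]

lemma max_add_max_add_max_le_mul (k p q r z : ℝ) (hk : 1 ≤ k) (hpq : p + q = (k - 1) * r) :
    max p 0 + max r 0 + max q 0 ≤
      k * -(min z 0 + min q 0 + min (-r) 0 + min (-z) 0 + min p 0 + min r 0) := by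
  -- writing `x⁻ = min x 0`, the difference is `k (z⁺ - z⁻) + (k - 1) (-p⁻ - q⁻ - 2 r⁻) - r⁻`
  have hz := min_neg_neg z 0
  have hr := min_neg_neg r 0
  rw [neg_zero] at hz hr
  have hp := max_add_min p 0
  have hq := max_add_min q 0
  have hr' := max_add_min r 0
  have hZ : 0 ≤ max z 0 - min z 0 := by linarith [le_max_right z 0, min_le_right z 0]
  have hpqr : 0 ≤ -min p 0 - min q 0 - 2 * min r 0 := by
    linarith [min_le_right p 0, min_le_right q 0, min_le_right r 0]
  nlinarith [mul_nonneg (zero_le_one.trans hk) hZ, mul_nonneg (sub_nonneg.2 hk) hpqr,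
    min_le_right r 0]

theorem PAp_le_QAp (h ε uA uB uC uD uE uF uG : ℝ) (hBD : uB + uD = 2 * uA)
    (hCF : uC + uF = 2 * uA) :
    PAp h ε uA uB uC uD ≤ QAp h ε uA uB uC uD uE uF uG := by
  have hD : (ε - h / 6) * (uD - uA) = -((ε - h / 6) * (uB - uA)) := by
    linear_combination (ε - h / 6) * hBD
  have hF : (ε - h / 3) * (uF - uA) = -((ε - h / 3) * (uC - uA)) := by
    linear_combination (ε - h / 3) * hCF
  simp only [PAp, QAp, hD, hF]
  exact max_add_max_add_max_neg_le _ _ _ _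

theorem QAm_le_PAm (h ε uA uB uC uD uE uF uG : ℝ) (hBD : uB + uD = 2 * uA)
    (hCF : uC + uF = 2 * uA) :
    QAm h ε uA uB uC uD uE uF uG ≤ PAm h ε uA uB uC uD := by
  rw [QAm_eq_neg_QAp_neg, PAm_eq_neg_PAp_neg, neg_le_neg_iff]
  exact PAp_le_QAp _ _ _ _ _ _ _ _ _ (by linarith) (by linarith)

theorem PBp_le_mul_QBp (h ε uA uB uC uG uH uI uJ : ℝ) (hh : 0 ≤ h) (hεh : 3 * ε < h)
    (hAH : uA + uH = 2 * uB) (hGJ : uG + uJ = 2 * uB) (hCI : uC + uI = 2 * uJ) :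
    PBp h ε uB uC uI uJ ≤ (2 * h - 3 * ε) / (h - 3 * ε) * QBp h ε uA uB uC uG uH uI uJ := by
  have hd : h - 3 * ε ≠ 0 := by linarith
  have hk : 1 ≤ (2 * h - 3 * ε) / (h - 3 * ε) := by
    rw [le_div_iff₀ (by linarith)]
    linarith
  have hH : (ε - h / 6) * (uH - uB) = -((ε - h / 6) * (uA - uB)) := by
    linear_combination (ε - h / 6) * hAH
  have hG : (ε - h / 3) * (uG - uB) = -((ε - h / 3) * (uJ - uB)) := by
    linear_combination (ε - h / 3) * hGJ
  have hIC : -(h / 6) * (uI - uB) + -(h / 6) * (uC - uB)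
      = ((2 * h - 3 * ε) / (h - 3 * ε) - 1) * ((ε - h / 3) * (uJ - uB)) := by
    rw [show (2 * h - 3 * ε) / (h - 3 * ε) - 1 = h / (h - 3 * ε) by field_simp; ring,
      div_mul_eq_mul_div, eq_div_iff hd]
    linear_combination (-(h / 6) * (h - 3 * ε)) * hCI
  simp only [PBp, QBp, hH, hG]
  exact max_add_max_add_max_le_mul _ _ _ _ _ hk hIC

theorem mul_QBm_le_PBm (h ε uA uB uC uG uH uI uJ : ℝ) (hh : 0 ≤ h) (hεh : 3 * ε < h)
    (hAH : uA + uH = 2 * uB) (hGJ : uG + uJ = 2 * uB) (hCI : uC + uI = 2 * uJ) :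
    (2 * h - 3 * ε) / (h - 3 * ε) * QBm h ε uA uB uC uG uH uI uJ ≤ PBm h ε uB uC uI uJ := by
  rw [QBm_eq_neg_QBp_neg, PBm_eq_neg_PBp_neg, mul_neg, neg_le_neg_iff]
  exact PBp_le_mul_QBp _ _ _ _ _ _ _ _ _ hh hεh (by linarith) (by linarith) (by linarith)

theorem PBp_eq_mul_QBp (h ε uA uB uC uG uH uI uJ : ℝ) (hh : 0 ≤ h) (hεh : 3 * ε < h)
    (hA : uA = uB) (hH : uH = uB) (hC : uC = uJ) (hI : uI = uJ) (hGJ : uG + uJ = 2 * uB)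
    (hJ : uJ ≤ uB) :
    PBp h ε uB uC uI uJ = (2 * h - 3 * ε) / (h - 3 * ε) * QBp h ε uA uB uC uG uH uI uJ := by
  have hd : h - 3 * ε ≠ 0 := by linarith
  have hG : (ε - h / 3) * (uG - uB) = -((ε - h / 3) * (uJ - uB)) := by
    linear_combination (ε - h / 3) * hGJ
  have hp : 0 ≤ -(h / 6) * (uJ - uB) :=
    mul_nonneg_of_nonpos_of_nonpos (by linarith) (by linarith)
  have hr : 0 ≤ (ε - h / 3) * (uJ - uB) :=
    mul_nonneg_of_nonpos_of_nonpos (by linarith) (by linarith)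
  simp only [PBp, QBp, hA, hH, hC, hI, hG, sub_self, mul_zero, min_self, max_eq_left hp,
    min_eq_right hp, max_eq_left hr, min_eq_right hr, min_eq_left (neg_nonpos.2 hr)]
  rw [div_mul_eq_mul_div, eq_div_iff hd]
  ring

theorem PBm_eq_mul_QBm (h ε uA uB uC uG uH uI uJ : ℝ) (hh : 0 ≤ h) (hεh : 3 * ε < h)
    (hA : uA = uB) (hH : uH = uB) (hC : uC = uJ) (hI : uI = uJ) (hGJ : uG + uJ = 2 * uB)
    (hJ : uB ≤ uJ) :
    PBm h ε uB uC uI uJ = (2 * h - 3 * ε) / (h - 3 * ε) * QBm h ε uA uB uC uG uH uI uJ := by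
  rw [QBm_eq_neg_QBp_neg, PBm_eq_neg_PBp_neg, mul_neg, neg_inj]
  exact PBp_eq_mul_QBp _ _ _ _ _ _ _ _ _ hh hεh (by rw [hA]) (by rw [hH]) (by rw [hC])
    (by rw [hI]) (by linarith) (by linarith)

theorem kuzmin_grid4_affine_bounds_general
    (h ε : ℝ) (hh : 0 < h) (hεh : ε < h / 9) :
    (∀ a b c vA vB vC vD vE vF vG vH vI vJ : ℝ,
      vA = a * h + b * (2 * h) + c → vB = a * h + b * h + c →
      vC = a * (2 * h) + b * (2 * h) + c → vD = a * h + b * (3 * h) + c →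
      vE = b * (3 * h) + c → vF = b * (2 * h) + c → vG = b * h + c →
      vH = a * h + c → vI = a * (2 * h) + c → vJ = a * (2 * h) + b * h + c →
      PAp h ε vA vB vC vD ≤ QAp h ε vA vB vC vD vE vF vG ∧
      QAm h ε vA vB vC vD vE vF vG ≤ PAm h ε vA vB vC vD ∧
      PBp h ε vB vC vI vJ
        ≤ (2 * h - 3 * ε) / (h - 3 * ε) * QBp h ε vA vB vC vG vH vI vJ ∧
      (2 * h - 3 * ε) / (h - 3 * ε) * QBm h ε vA vB vC vG vH vI vJ
        ≤ PBm h ε vB vC vI vJ) ∧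
    (∀ vA vB vC vG vH vI vJ : ℝ,
      vA = 1 - h / h → vB = 1 - h / h → vC = 1 - 2 * h / h → vG = 1 - 0 / h →
      vH = 1 - h / h → vI = 1 - 2 * h / h → vJ = 1 - 2 * h / h →
      PBp h ε vB vC vI vJ
        = (2 * h - 3 * ε) / (h - 3 * ε) * QBp h ε vA vB vC vG vH vI vJ) ∧
    (∀ vA vB vC vG vH vI vJ : ℝ,
      vA = h / h - 1 → vB = h / h - 1 → vC = 2 * h / h - 1 → vG = 0 / h - 1 →
      vH = h / h - 1 → vI = 2 * h / h - 1 → vJ = 2 * h / h - 1 →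
      PBm h ε vB vC vI vJ
        = (2 * h - 3 * ε) / (h - 3 * ε) * QBm h ε vA vB vC vG vH vI vJ) := by
  have hεh' : 3 * ε < h := by linarith
  have h1 : h / h = 1 := div_self hh.ne'
  have h2 : 2 * h / h = 2 := by rw [mul_div_assoc, h1, mul_one]
  refine ⟨?_, ?_, ?_⟩
  · intro a b c vA vB vC vD vE vF vG vH vI vJ hA hB hC hD hE hF hG hH hI hJ
    subst vA vB vC vD vE vF vG vH vI vJ
    exact ⟨PAp_le_QAp _ _ _ _ _ _ _ _ _ (by ring) (by ring),
      QAm_le_PAm _ _ _ _ _ _ _ _ _ (by ring) (by ring),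
      PBp_le_mul_QBp _ _ _ _ _ _ _ _ _ hh.le hεh' (by ring) (by ring) (by ring),
      mul_QBm_le_PBm _ _ _ _ _ _ _ _ _ hh.le hεh' (by ring) (by ring) (by ring)⟩
  · intro vA vB vC vG vH vI vJ hA hB hC hG hH hI hJ
    rw [h1, h2, zero_div] at *
    subst vA vB vC vG vH vI vJ
    exact PBp_eq_mul_QBp _ _ _ _ _ _ _ _ _ hh.le hεh' rfl rfl rfl rfl (by norm_num) (by norm_num)
  · intro vA vB vC vG vH vI vJ hA hB hC hG hH hI hJ
    rw [h1, h2, zero_div] at *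
    subst vA vB vC vG vH vI vJ
    exact PBm_eq_mul_QBm _ _ _ _ _ _ _ _ _ hh.le hεh' rfl rfl rfl rfl (by norm_num) (by norm_num)

/-- Lemma 1 of the paper: on the Grid-4 patch, for every affine function
`u(x,y) = a x + b y + c` the Kuzmin limiter quantities computed from the nodal values
satisfy `P_A^+ ≤ Q_A^+`, `P_A^- ≥ Q_A^-`, `P_B^+ ≤ ((2h-3ε)/(h-3ε)) Q_B^+`,
`P_B^- ≥ ((2h-3ε)/(h-3ε)) Q_B^-`, and the latter two inequalities are sharp
(equality for `u(x,y) = 1 - x/h` resp. `u(x,y) = x/h - 1`). -/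
theorem kuzmin_grid4_affine_bounds
    (h ε : ℝ) (hh : 0 < h) (hε : 0 < ε) (hεh : ε < h / 9) :
    (∀ a b c vA vB vC vD vE vF vG vH vI vJ : ℝ,
      vA = a * h + b * (2 * h) + c → vB = a * h + b * h + c →
      vC = a * (2 * h) + b * (2 * h) + c → vD = a * h + b * (3 * h) + c →
      vE = b * (3 * h) + c → vF = b * (2 * h) + c → vG = b * h + c →
      vH = a * h + c → vI = a * (2 * h) + c → vJ = a * (2 * h) + b * h + c →
      PAp h ε vA vB vC vD ≤ QAp h ε vA vB vC vD vE vF vG ∧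
      QAm h ε vA vB vC vD vE vF vG ≤ PAm h ε vA vB vC vD ∧
      PBp h ε vB vC vI vJ
        ≤ (2 * h - 3 * ε) / (h - 3 * ε) * QBp h ε vA vB vC vG vH vI vJ ∧
      (2 * h - 3 * ε) / (h - 3 * ε) * QBm h ε vA vB vC vG vH vI vJ
        ≤ PBm h ε vB vC vI vJ) ∧
    (∀ vA vB vC vG vH vI vJ : ℝ,
      vA = 1 - h / h → vB = 1 - h / h → vC = 1 - 2 * h / h → vG = 1 - 0 / h →
      vH = 1 - h / h → vI = 1 - 2 * h / h → vJ = 1 - 2 * h / h →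
      PBp h ε vB vC vI vJ
        = (2 * h - 3 * ε) / (h - 3 * ε) * QBp h ε vA vB vC vG vH vI vJ) ∧
    (∀ vA vB vC vG vH vI vJ : ℝ,
      vA = h / h - 1 → vB = h / h - 1 → vC = 2 * h / h - 1 → vG = 0 / h - 1 →
      vH = h / h - 1 → vI = 2 * h / h - 1 → vJ = 2 * h / h - 1 →
      PBm h ε vB vC vI vJ
        = (2 * h - 3 * ε) / (h - 3 * ε) * QBm h ε vA vB vC vG vH vI vJ) :=
  kuzmin_grid4_affine_bounds_general h ε hh hεh

end
end

section
/- In the Grid-4 patch setting, let the nodal values be u_P = x_P + α if y_P/h ∈ {1,3} and u_P = x_P − β if y_P/h ∈ {0,2}, where (x_P, y_P) are the coordinates of the point P, α, β > 0, and δ := α + β ≤ h. Then the fluxes satisfy f_{AB} ≤ 0, f_{AC} ≤ 0, f_{AD} ≤ 0, f_{AE} ≥ 0, f_{AF} ≥ 0, f_{AG} ≥ 0, f_{BI} ≤ 0, f_{BJ} ≤ 0, f_{BC} ≤ 0, f_{BA} ≥ 0, f_{BG} ≥ 0, f_{BH} ≥ 0; consequently P_A^+ = P_B^+ = 0, and moreover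 P_A^- = Q_B^- = ε(h + 2δ) − (h/3)(h + δ) and Q_A^- = P_B^- = εh − (h/3)(2h − δ). -/
noncomputable section

/-- For the oscillating nodal values `u_P = x_P + α` on odd horizontal grid lines and
`u_P = x_P - β` on even horizontal grid lines (with `α, β > 0`, `δ := α + β ≤ h`),
all fluxes at the Grid-4 patch nodes `A` and `B` have the indicated signs; consequently
`P_A^+ = P_B^+ = 0`, and `P_A^- = Q_B^- = ε(h+2δ) - (h/3)(h+δ)`,
`Q_A^- = P_B^- = εh - (h/3)(2h-δ)`. -/
theorem kuzmin_grid4_oscillating_fluxes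
    (h ε α β δ : ℝ) (hh : 0 < h) (hε : 0 < ε) (hεh : ε < h / 9)
    (hα : 0 < α) (hβ : 0 < β) (hδ : δ = α + β) (hδh : δ ≤ h)
    (vA vB vC vD vE vF vG vH vI vJ : ℝ)
    (eA : vA = h - β) (eB : vB = h + α) (eC : vC = 2 * h - β) (eD : vD = h + α)
    (eE : vE = α) (eF : vF = -β) (eG : vG = α) (eH : vH = h - β)
    (eI : vI = 2 * h - β) (eJ : vJ = 2 * h + α) :
    ((ε - h / 6) * (vB - vA) ≤ 0 ∧ (ε - h / 3) * (vC - vA) ≤ 0 ∧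
      (ε - h / 6) * (vD - vA) ≤ 0 ∧ 0 ≤ -(h / 6) * (vE - vA) ∧
      0 ≤ (ε - h / 3) * (vF - vA) ∧ 0 ≤ -(h / 6) * (vG - vA) ∧
      -(h / 6) * (vI - vB) ≤ 0 ∧ (ε - h / 3) * (vJ - vB) ≤ 0 ∧
      -(h / 6) * (vC - vB) ≤ 0 ∧ 0 ≤ (ε - h / 6) * (vA - vB) ∧
      0 ≤ (ε - h / 3) * (vG - vB) ∧ 0 ≤ (ε - h / 6) * (vH - vB)) ∧
    PAp h ε vA vB vC vD = 0 ∧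
    PBp h ε vB vC vI vJ = 0 ∧
    PAm h ε vA vB vC vD = ε * (h + 2 * δ) - h / 3 * (h + δ) ∧
    QBm h ε vA vB vC vG vH vI vJ = ε * (h + 2 * δ) - h / 3 * (h + δ) ∧
    QAm h ε vA vB vC vD vE vF vG = ε * h - h / 3 * (2 * h - δ) ∧
    PBm h ε vB vC vI vJ = ε * h - h / 3 * (2 * h - δ) := by
  have s1 : (ε - h / 6) * (vB - vA) ≤ 0 := by rw [eA, eB]; exact mul_nonpos_of_nonpos_of_nonneg (by linarith) (by linarith)
  have s2 : (ε - h / 3) * (vC - vA) ≤ 0 := by rw [eA, eC]; exact mul_nonpos_of_nonpos_of_nonneg (by linarith) (by linarith)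
  have s3 : (ε - h / 6) * (vD - vA) ≤ 0 := by rw [eA, eD]; exact mul_nonpos_of_nonpos_of_nonneg (by linarith) (by linarith)
  have s4 : 0 ≤ -(h / 6) * (vE - vA) := by rw [eA, eE]; exact mul_nonneg_of_nonpos_of_nonpos (by linarith) (by linarith)
  have s5 : 0 ≤ (ε - h / 3) * (vF - vA) := by rw [eA, eF]; exact mul_nonneg_of_nonpos_of_nonpos (by linarith) (by linarith)
  have s6 : 0 ≤ -(h / 6) * (vG - vA) := by rw [eA, eG]; exact mul_nonneg_of_nonpos_of_nonpos (by linarith) (by linarith)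
  have s7 : -(h / 6) * (vI - vB) ≤ 0 := by rw [eB, eI]; exact mul_nonpos_of_nonpos_of_nonneg (by linarith) (by linarith)
  have s8 : (ε - h / 3) * (vJ - vB) ≤ 0 := by rw [eB, eJ]; exact mul_nonpos_of_nonpos_of_nonneg (by linarith) (by linarith)
  have s9 : -(h / 6) * (vC - vB) ≤ 0 := by rw [eB, eC]; exact mul_nonpos_of_nonpos_of_nonneg (by linarith) (by linarith)
  have s10 : 0 ≤ (ε - h / 6) * (vA - vB) := by rw [eA, eB]; exact mul_nonneg_of_nonpos_of_nonpos (by linarith) (by linarith)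
  have s11 : 0 ≤ (ε - h / 3) * (vG - vB) := by rw [eB, eG]; exact mul_nonneg_of_nonpos_of_nonpos (by linarith) (by linarith)
  have s12 : 0 ≤ (ε - h / 6) * (vH - vB) := by rw [eB, eH]; exact mul_nonneg_of_nonpos_of_nonpos (by linarith) (by linarith)
  refine ⟨⟨s1, s2, s3, s4, s5, s6, s7, s8, s9, s10, s11, s12⟩, ?_, ?_, ?_, ?_, ?_, ?_⟩
  · rw [PAp, max_eq_right s1, max_eq_right s2, max_eq_right s3]; ring
  · rw [PBp, max_eq_right s7, max_eq_right s8, max_eq_right s9]; ring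
  · rw [PAm, min_eq_left s1, min_eq_left s2, min_eq_left s3, eA, eB, eC, eD, hδ]; ring
  · rw [QBm, max_eq_left s10, max_eq_right s9, max_eq_left s11, max_eq_left s12,
      max_eq_right s7, max_eq_right s8, eA, eB, eG, eH, hδ]; ring
  · rw [QAm, max_eq_right s1, max_eq_right s2, max_eq_right s3, max_eq_left s4,
      max_eq_left s5, max_eq_left s6, eA, eE, eF, eG, hδ]; ring
  · rw [PBm, min_eq_left s7, min_eq_left s8, min_eq_left s9, eB, eC, eI, eJ, hδ]; ring
end
end

section
/- In the Grid-4 patch setting, let the nodal values be u_P = x_P + α if y_P/h ∈ {1,3} and u_P = x_P − β if y_P/h ∈ {0,2}, with α, β > 0 and δ := α + β = h²/(2(h − 3ε)). (Note that 0 < δ ≤ h holds automatically since 0 < ε < h/9.) Then P_A^+ = P_B^+ = 0, P_A^- = Q_A^-, and P_B^- = Q_B^-, so that the Kuzmin limiter values satisfy R_A^+ = R_A^- = R_B^+ = R_B^- = 1; i.e., the AFC stabilization term with the Kuzmin limiter vanishes at the nodes A and B for this oscillating function. -/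
noncomputable section

/-- `R = min{1, Q/P}`, set to `1` if `P = 0`. -/
def Rlim (P Q : ℝ) : ℝ := if P = 0 then 1 else min 1 (Q / P)

/-- For the oscillating nodal values `u_P = x_P + α` (odd rows), `u_P = x_P - β` (even rows)
with `α, β > 0` and `δ := α + β = h²/(2(h-3ε))` (which automatically satisfies `0 < δ ≤ h`
since `0 < ε < h/9`), one has `P_A^+ = P_B^+ = 0`, `P_A^- = Q_A^-`, `P_B^- = Q_B^-`, and
hence `R_A^+ = R_A^- = R_B^+ = R_B^- = 1`: the AFC stabilization term with the Kuzmin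
limiter vanishes at the nodes `A` and `B`. -/
theorem kuzmin_grid4_stabilization_vanishes
    (h ε α β δ : ℝ) (hh : 0 < h) (hε : 0 < ε) (hεh : ε < h / 9)
    (hα : 0 < α) (hβ : 0 < β) (hδ : δ = α + β)
    (hδval : δ = h ^ 2 / (2 * (h - 3 * ε)))
    (vA vB vC vD vE vF vG vH vI vJ : ℝ)
    (eA : vA = h - β) (eB : vB = h + α) (eC : vC = 2 * h - β) (eD : vD = h + α)
    (eE : vE = α) (eF : vF = -β) (eG : vG = α) (eH : vH = h - β)
    (eI : vI = 2 * h - β) (eJ : vJ = 2 * h + α) :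
    0 < δ ∧ δ ≤ h ∧
    PAp h ε vA vB vC vD = 0 ∧
    PBp h ε vB vC vI vJ = 0 ∧
    PAm h ε vA vB vC vD = QAm h ε vA vB vC vD vE vF vG ∧
    PBm h ε vB vC vI vJ = QBm h ε vA vB vC vG vH vI vJ ∧
    Rlim (PAp h ε vA vB vC vD) (QAp h ε vA vB vC vD vE vF vG) = 1 ∧
    Rlim (PAm h ε vA vB vC vD) (QAm h ε vA vB vC vD vE vF vG) = 1 ∧
    Rlim (PBp h ε vB vC vI vJ) (QBp h ε vA vB vC vG vH vI vJ) = 1 ∧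
    Rlim (PBm h ε vB vC vI vJ) (QBm h ε vA vB vC vG vH vI vJ) = 1 := by

  subst hδ
  simp only [eA, eB, eC, eD, eE, eF, eG, eH, eI, eJ]
  have hden : 0 < h - 3 * ε := by linarith
  have hkey : (α + β) * (2 * (h - 3 * ε)) = h ^ 2 := by
    rw [hδval, div_mul_cancel₀ _ (by positivity : 2 * (h - 3 * ε) ≠ 0)]
  have hδpos : 0 < α + β := by linarith
  have hδle : α + β ≤ h := by nlinarith
  have c1 : ε - h / 6 ≤ 0 := by linarith
  have c2 : ε - h / 3 ≤ 0 := by linarith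
  have c3 : -(h / 6) ≤ 0 := by linarith
  -- sign facts at A
  have sAB : (ε - h / 6) * (h + α - (h - β)) ≤ 0 :=
    mul_nonpos_of_nonpos_of_nonneg c1 (by linarith)
  have sAC : (ε - h / 3) * (2 * h - β - (h - β)) ≤ 0 :=
    mul_nonpos_of_nonpos_of_nonneg c2 (by linarith)
  have sAD : (ε - h / 6) * (h + α - (h - β)) ≤ 0 := sAB
  have sAE : 0 ≤ -(h / 6) * (α - (h - β)) := by
    linarith [mul_nonneg (show (0:ℝ) ≤ h / 6 by linarith) (show (0:ℝ) ≤ h - β - α by linarith)]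
  have sAF : 0 ≤ (ε - h / 3) * (-β - (h - β)) := by
    linarith [mul_nonneg (show (0:ℝ) ≤ h / 3 - ε by linarith) (show (0:ℝ) ≤ h by linarith)]
  have sAG : 0 ≤ -(h / 6) * (α - (h - β)) := sAE
  -- sign facts at B
  have sBI : -(h / 6) * (2 * h - β - (h + α)) ≤ 0 :=
    mul_nonpos_of_nonpos_of_nonneg c3 (by linarith)
  have sBJ : (ε - h / 3) * (2 * h + α - (h + α)) ≤ 0 :=
    mul_nonpos_of_nonpos_of_nonneg c2 (by linarith)
  have sBC : -(h / 6) * (2 * h - β - (h + α)) ≤ 0 := sBI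
  have sBA : 0 ≤ (ε - h / 6) * (h - β - (h + α)) := by
    linarith [mul_nonneg (show (0:ℝ) ≤ h / 6 - ε by linarith) (show (0:ℝ) ≤ α + β by linarith)]
  have sBG : 0 ≤ (ε - h / 3) * (α - (h + α)) := by
    linarith [mul_nonneg (show (0:ℝ) ≤ h / 3 - ε by linarith) (show (0:ℝ) ≤ h by linarith)]
  have sBH : 0 ≤ (ε - h / 6) * (h - β - (h + α)) := sBA
  have hPAp : PAp h ε (h - β) (h + α) (2 * h - β) (h + α) = 0 := by
    unfold PAp
    rw [max_eq_right sAB, max_eq_right sAC]; ring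
  have hPBp : PBp h ε (h + α) (2 * h - β) (2 * h - β) (2 * h + α) = 0 := by
    unfold PBp
    rw [max_eq_right sBI, max_eq_right sBJ]; ring
  have hPAm : PAm h ε (h - β) (h + α) (2 * h - β) (h + α)
      = QAm h ε (h - β) (h + α) (2 * h - β) (h + α) α (-β) α := by
    unfold PAm QAm
    rw [min_eq_left sAB, min_eq_left sAC,
      max_eq_right sAB, max_eq_right sAC,
      max_eq_left sAE, max_eq_left sAF]
    linarith [hkey]
  have hPBm : PBm h ε (h + α) (2 * h - β) (2 * h - β) (2 * h + α)
      = QBm h ε (h - β) (h + α) (2 * h - β) α (h - β) (2 * h - β) (2 * h + α) := by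
    unfold PBm QBm
    rw [min_eq_left sBI, min_eq_left sBJ,
      max_eq_right sBI, max_eq_right sBJ,
      max_eq_left sBA, max_eq_left sBG]
    linarith [hkey]
  have Rlim_self : ∀ P : ℝ, Rlim P P = 1 := by
    intro P; unfold Rlim
    split
    · rfl
    · rw [div_self (by assumption)]; simp
  refine ⟨hδpos, hδle, hPAp, hPBp, hPAm, hPBm, ?_, ?_, ?_, ?_⟩
  · rw [hPAp]; simp [Rlim]
  · rw [hPAm]; exact Rlim_self _
  · rw [hPBp]; simp [Rlim]
  · rw [hPBm]; exact Rlim_self _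

end
end

section
/- Fix N ≥ 1, an index i, a finite neighbour set S_i of indices with i ∉ S_i, reals a_{ik} and a_{ki} (k ∈ S_i), weights p_{ik}, q_{ik} with 0 ≤ p_{ik} ≤ q_{ik} and p_{ik} > 0 whenever a_{ik} > 0, and continuous functions u_{ik} : ℝ^N → ℝ (k ∈ S_i). For U = (u_1,…,u_N) ∈ ℝ^N define P_i^+(U) = ∑_{k ∈ S_i, a_{ik} > 0 or a_{ki} > 0} p_{ik} [ (u_i − u_k)⁺ + (u_i − u_{ik}(U))⁺ ], P_i^-(U) analogously with negative parts, Q_i^+(U) = ∑_{k ∈ S_i} q_{ik} [ (u_k − u_i)⁺ + (u_{ik}(U) − u_i)⁺ ], Q_i^-(U) analogously with negative parts, R_i^+(U) = min{1, Q_i^+(U)/P_i^+(U)} if P_i^+(U) ≠ 0 and R_i^+(U) = 1 otherwise, analogously R_i^-(U), and for j ∈ S_i set β_{ij}(U) = 1 − R_i^+(U) if u_i > u_j, β_{ij}(U) = 0 if u_i = u_j, and β_{ij}(U) = 1 − R_i^-(U) if u_i < u_j. Then, for every j ∈ S_i with a_{ij} > 0, the function U ↦ β_{ij}(U)(u_j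 − u_i) is continuous on ℝ^N. -/
/-!
Away from the diagonal `u_i = u_j`, `β_{ij}` agrees near `U` with `1 - R_i^±`, which is continuous
there because the term of `j` (with `p_{ij} > 0`) keeps `P_i^±` away from zero. Since `P_i^±` and
`Q_i^±` have the same sign, `R_i^± ∈ [0, 1]`, so `β_{ij}` is bounded and `β_{ij}(U)(u_j - u_i)`
tends to `0` at the diagonal.
-/

open Finset Filter Topology

theorem continuous_mul_of_continuousAt_of_norm_le {X R : Type*} [TopologicalSpace X] [NormedRing R]
    {b d : X → R} {C : ℝ} (hd : Continuous d) (hb : ∀ x, d x ≠ 0 → ContinuousAt b x)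
    (hbC : ∀ x, ‖b x‖ ≤ C) : Continuous fun x => b x * d x := by
  refine continuous_iff_continuousAt.2 fun x => ?_
  by_cases hdx : d x = 0
  · have hlim : Tendsto (fun y => C * ‖d y‖) (𝓝 x) (𝓝 0) :=
      (continuous_const.mul hd.norm).tendsto' x 0 (by simp [hdx])
    show Tendsto _ (𝓝 x) (𝓝 (b x * d x))
    rw [hdx, mul_zero]
    exact squeeze_zero_norm (fun y => (norm_mul_le _ _).trans
      (mul_le_mul_of_nonneg_right (hbC y) (norm_nonneg _))) hlim
  · exact (hb x hdx).mul hd.continuousAt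

theorem continuous_ite_lt_mul_sub {X : Type*} [TopologicalSpace X] {a b f g : X → ℝ} {C : ℝ}
    (ha : Continuous a) (hb : Continuous b) (hf : ∀ x, a x < b x → ContinuousAt f x)
    (hg : ∀ x, b x < a x → ContinuousAt g x) (hfC : ∀ x, |f x| ≤ C) (hgC : ∀ x, |g x| ≤ C) :
    Continuous fun x => (if a x < b x then f x else if b x < a x then g x else 0) * (a x - b x) := by
  refine continuous_mul_of_continuousAt_of_norm_le (C := C) (ha.sub hb) (fun x hx => ?_)
    fun x => ?_
  · rcases lt_or_gt_of_ne (sub_ne_zero.1 hx) with hab | hba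
    · refine (hf x hab).congr ?_
      filter_upwards [(isOpen_lt ha hb).mem_nhds hab] with y hy
      rw [if_pos hy]
    · refine (hg x hba).congr ?_
      filter_upwards [(isOpen_lt hb ha).mem_nhds hba] with y hy
      rw [if_neg hy.not_gt, if_pos hy]
  · rw [Real.norm_eq_abs]
    split_ifs
    exacts [hfC x, hgC x, abs_zero.trans_le ((abs_nonneg _).trans (hfC x))]

/-- `R_i^±` as a function of `Q_i^±` and `P_i^±`. -/
noncomputable def limiterFactor (Q P : ℝ) : ℝ := if P ≠ 0 then min 1 (Q / P) else 1

theorem abs_one_sub_limiterFactor_le_one {Q P : ℝ} (h : 0 ≤ Q / P) :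
    |1 - limiterFactor Q P| ≤ 1 := by
  refine abs_sub_le_of_nonneg_of_le zero_le_one le_rfl ?_ ?_ <;> unfold limiterFactor <;> split_ifs
  exacts [le_min zero_le_one h, zero_le_one, min_le_left _ _, le_rfl]

theorem ContinuousAt.limiterFactor {X : Type*} [TopologicalSpace X] {Q P : X → ℝ} {x : X}
    (hQ : ContinuousAt Q x) (hP : ContinuousAt P x) (hPx : P x ≠ 0) :
    ContinuousAt (fun y => limiterFactor (Q y) (P y)) x :=
  ContinuousAt.congr (continuousAt_const.min (hQ.div hP hPx)) <|
    (hP.eventually_ne hPx).mono fun _ hy => (if_pos hy).symm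

section LimiterSums

variable {ι : Type*} {s : Finset ι} {w x y : ι → ℝ}

theorem mul_max_add_max_nonneg {c a b : ℝ} (hc : 0 ≤ c) : 0 ≤ c * (max a 0 + max b 0) :=
  mul_nonneg hc (add_nonneg (le_max_right _ _) (le_max_right _ _))

theorem sum_mul_max_add_max_nonneg (hw : ∀ k ∈ s, 0 ≤ w k) :
    0 ≤ ∑ k ∈ s, w k * (max (x k) 0 + max (y k) 0) :=
  sum_nonneg fun k hk => mul_max_add_max_nonneg (hw k hk)

theorem sum_mul_max_add_max_pos (hw : ∀ k ∈ s, 0 ≤ w k) {j : ι} (hj : j ∈ s) (hwj : 0 < w j)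
    (hxj : 0 < x j) : 0 < ∑ k ∈ s, w k * (max (x k) 0 + max (y k) 0) :=
  calc 0 < w j * (max (x j) 0 + max (y j) 0) :=
        mul_pos hwj (add_pos_of_pos_of_nonneg (lt_max_of_lt_left hxj) (le_max_right _ _))
    _ ≤ _ := single_le_sum (f := fun k => w k * (max (x k) 0 + max (y k) 0))
        (fun k hk => mul_max_add_max_nonneg (hw k hk)) hj

theorem sum_mul_min_add_min_eq_neg :
    ∑ k ∈ s, w k * (min (x k) 0 + min (y k) 0) =
      -∑ k ∈ s, w k * (max (-x k) 0 + max (-y k) 0) := by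
  have hmax : ∀ t : ℝ, max (-t) 0 = -min t 0 := fun t => by rw [← max_neg_neg, neg_zero]
  rw [← sum_neg_distrib]
  exact sum_congr rfl fun k _ => by rw [hmax, hmax]; ring

theorem sum_mul_min_add_min_nonpos (hw : ∀ k ∈ s, 0 ≤ w k) :
    ∑ k ∈ s, w k * (min (x k) 0 + min (y k) 0) ≤ 0 :=
  sum_mul_min_add_min_eq_neg.trans_le (neg_nonpos.2 (sum_mul_max_add_max_nonneg hw))

theorem sum_mul_min_add_min_neg (hw : ∀ k ∈ s, 0 ≤ w k) {j : ι} (hj : j ∈ s) (hwj : 0 < w j)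
    (hxj : x j < 0) : ∑ k ∈ s, w k * (min (x k) 0 + min (y k) 0) < 0 :=
  sum_mul_min_add_min_eq_neg.trans_lt
    (neg_neg_of_pos (sum_mul_max_add_max_pos (x := -x) hw hj hwj (neg_pos.2 hxj)))

end LimiterSums

theorem smuas_limiter_continuous_general
    (N : ℕ) (i : Fin N) (S : Finset (Fin N))
    (a a' p q : Fin N → ℝ)
    (hp0 : ∀ k ∈ S, 0 ≤ p k) (hpq : ∀ k ∈ S, p k ≤ q k)
    (hpa : ∀ k ∈ S, 0 < a k → 0 < p k)
    (uik : Fin N → (Fin N → ℝ) → ℝ)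
    (huik : ∀ k ∈ S, Continuous (uik k))
    (Pp Pm Qp Qm Rp Rm : (Fin N → ℝ) → ℝ)
    (hPp : ∀ U : Fin N → ℝ, Pp U = ∑ k ∈ S.filter (fun k => 0 < a k ∨ 0 < a' k),
        p k * (max (U i - U k) 0 + max (U i - uik k U) 0))
    (hPm : ∀ U : Fin N → ℝ, Pm U = ∑ k ∈ S.filter (fun k => 0 < a k ∨ 0 < a' k),
        p k * (min (U i - U k) 0 + min (U i - uik k U) 0))
    (hQp : ∀ U : Fin N → ℝ, Qp U = ∑ k ∈ S,
        q k * (max (U k - U i) 0 + max (uik k U - U i) 0))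
    (hQm : ∀ U : Fin N → ℝ, Qm U = ∑ k ∈ S,
        q k * (min (U k - U i) 0 + min (uik k U - U i) 0))
    (hRp : ∀ U : Fin N → ℝ, Rp U = if Pp U ≠ 0 then min 1 (Qp U / Pp U) else 1)
    (hRm : ∀ U : Fin N → ℝ, Rm U = if Pm U ≠ 0 then min 1 (Qm U / Pm U) else 1)
    (β : Fin N → (Fin N → ℝ) → ℝ)
    (hβ : ∀ j ∈ S, ∀ U : Fin N → ℝ,
        β j U = if U j < U i then 1 - Rp U else if U i < U j then 1 - Rm U else 0) :
    ∀ j ∈ S, 0 < a j → Continuous (fun U : Fin N → ℝ => β j U * (U j - U i)) := by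
  intro j hj haj
  set F := S.filter (fun k => 0 < a k ∨ 0 < a' k)
  have hq0 : ∀ k ∈ S, 0 ≤ q k := fun k hk => (hp0 k hk).trans (hpq k hk)
  have hjF : j ∈ F := mem_filter.2 ⟨hj, .inl haj⟩
  have hpj : 0 < p j := hpa j hj haj
  have hFS : F ⊆ S := filter_subset _ _
  have hpF : ∀ k ∈ F, 0 ≤ p k := fun k hk => hp0 k (hFS hk)
  have hPp_cont : Continuous Pp := by rw [funext hPp]; fun_prop (disch := exact hFS ‹_›)
  have hPm_cont : Continuous Pm := by rw [funext hPm]; fun_prop (disch := exact hFS ‹_›)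
  have hQp_cont : Continuous Qp := by rw [funext hQp]; fun_prop (disch := assumption)
  have hQm_cont : Continuous Qm := by rw [funext hQm]; fun_prop (disch := assumption)
  refine (continuous_ite_lt_mul_sub (C := 1) (continuous_apply j) (continuous_apply i)
    (fun U hU => ?_) (fun U hU => ?_) (fun U => ?_) (fun U => ?_)).congr fun U => by rw [hβ j hj U]
  · have hPpos : 0 < Pp U := by rw [hPp]; exact sum_mul_max_add_max_pos hpF hjF hpj (sub_pos.2 hU)
    rw [show Rp = fun U => limiterFactor (Qp U) (Pp U) from funext hRp]
    exact continuousAt_const.sub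
      (hQp_cont.continuousAt.limiterFactor hPp_cont.continuousAt hPpos.ne')
  · have hPneg : Pm U < 0 := by rw [hPm]; exact sum_mul_min_add_min_neg hpF hjF hpj (sub_neg.2 hU)
    rw [show Rm = fun U => limiterFactor (Qm U) (Pm U) from funext hRm]
    exact continuousAt_const.sub
      (hQm_cont.continuousAt.limiterFactor hPm_cont.continuousAt hPneg.ne)
  · rw [hRp U]
    exact abs_one_sub_limiterFactor_le_one (div_nonneg
      (hQp U ▸ sum_mul_max_add_max_nonneg hq0) (hPp U ▸ sum_mul_max_add_max_nonneg hpF))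
  · rw [hRm U]
    exact abs_one_sub_limiterFactor_le_one (div_nonneg_of_nonpos
      (hQm U ▸ sum_mul_min_add_min_nonpos hq0) (hPm U ▸ sum_mul_min_add_min_nonpos hpF))

/-- Assumption (A1) for the SMUAS method: with the symmetrized limiter quantities
`P_i^±(U)`, `Q_i^±(U)` built from weights `0 ≤ p_{ik} ≤ q_{ik}` (with `p_{ik} > 0`
whenever `a_{ik} > 0`) and continuous symmetrized values `u_{ik}(U)`, and with
`R_i^±(U) = min{1, Q_i^±(U)/P_i^±(U)}` (set to `1` if `P_i^±(U) = 0`) and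
`β_{ij}(U) = 1 − R_i^+(U)` if `u_i > u_j`, `0` if `u_i = u_j`, `1 − R_i^-(U)` if
`u_i < u_j`, the function `U ↦ β_{ij}(U)(u_j − u_i)` is continuous for every `j ∈ S_i`
with `a_{ij} > 0`. -/
theorem smuas_limiter_continuous
    (N : ℕ) (hN : 1 ≤ N) (i : Fin N) (S : Finset (Fin N)) (hiS : i ∉ S)
    (a a' p q : Fin N → ℝ)
    (hp0 : ∀ k ∈ S, 0 ≤ p k) (hpq : ∀ k ∈ S, p k ≤ q k)
    (hpa : ∀ k ∈ S, 0 < a k → 0 < p k)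
    (uik : Fin N → (Fin N → ℝ) → ℝ)
    (huik : ∀ k ∈ S, Continuous (uik k))
    (Pp Pm Qp Qm Rp Rm : (Fin N → ℝ) → ℝ)
    (hPp : ∀ U : Fin N → ℝ, Pp U = ∑ k ∈ S.filter (fun k => 0 < a k ∨ 0 < a' k),
        p k * (max (U i - U k) 0 + max (U i - uik k U) 0))
    (hPm : ∀ U : Fin N → ℝ, Pm U = ∑ k ∈ S.filter (fun k => 0 < a k ∨ 0 < a' k),
        p k * (min (U i - U k) 0 + min (U i - uik k U) 0))
    (hQp : ∀ U : Fin N → ℝ, Qp U = ∑ k ∈ S,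
        q k * (max (U k - U i) 0 + max (uik k U - U i) 0))
    (hQm : ∀ U : Fin N → ℝ, Qm U = ∑ k ∈ S,
        q k * (min (U k - U i) 0 + min (uik k U - U i) 0))
    (hRp : ∀ U : Fin N → ℝ, Rp U = if Pp U ≠ 0 then min 1 (Qp U / Pp U) else 1)
    (hRm : ∀ U : Fin N → ℝ, Rm U = if Pm U ≠ 0 then min 1 (Qm U / Pm U) else 1)
    (β : Fin N → (Fin N → ℝ) → ℝ)
    (hβ : ∀ j ∈ S, ∀ U : Fin N → ℝ,
        β j U = if U j < U i then 1 - Rp U else if U i < U j then 1 - Rm U else 0) :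
    ∀ j ∈ S, 0 < a j → Continuous (fun U : Fin N → ℝ => β j U * (U j - U i)) :=
  smuas_limiter_continuous_general N i S a a' p q hp0 hpq hpa uik huik Pp Pm Qp Qm Rp Rm hPp hPm hQp
    hQm hRp hRm β hβ
end

section
/- Fix an index i, a finite neighbour set S_i with i ∉ S_i, reals a_{ik}, a_{ki}, u_i, u_k (k ∈ S_i), and weights p_{ik}, q_{ik} with 0 ≤ p_{ik} ≤ q_{ik}. Suppose the symmetrized values satisfy u_i − u_{ik} = u_k − u_i for every k ∈ S_i (as holds when the underlying finite element function is affine, i.e., a polynomial of degree at most one). Then the SMUAS limiter quantities satisfy P_i^+ = −P_i^- = ∑_{k ∈ S_i, a_{ik} > 0 or a_{ki} > 0} p_{ik} |u_i − u_k| and Q_i^+ = −Q_i^- = ∑_{k ∈ S_i} q_{ik} |u_i − u_k|, hence P_i^+ ≤ Q_i^+ and P_i^- ≥ Q_i^-, so that R_i^+ = R_i^- = 1 and β_{ij} = 0 for every j ∈ S_i. Consequently the SMUAS stabilization term vanishes for affine functions: the SMUAS method is linearity preserving. -/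
lemma smuas_max_abs (t : ℝ) : max t 0 + max (-t) 0 = |t| := by
  rcases le_total t 0 with h | h
  · rw [max_eq_right h, max_eq_left (by linarith), abs_of_nonpos h]; ring
  · rw [max_eq_left h, max_eq_right (by linarith), abs_of_nonneg h]; ring

lemma smuas_min_abs (t : ℝ) : min t 0 + min (-t) 0 = -|t| := by
  rcases le_total t 0 with h | h
  · rw [min_eq_left h, min_eq_right (by linarith), abs_of_nonpos h]; ring
  · rw [min_eq_right h, min_eq_left (by linarith), abs_of_nonneg h]; ring

/-- Linearity preservation of the SMUAS method: if the symmetrized values satisfy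
`u_i − u_{ik} = u_k − u_i` for every `k ∈ S_i` (as holds for affine finite element
functions) and `0 ≤ p_{ik} ≤ q_{ik}`, then
`P_i^+ = −P_i^- = ∑_{k ∈ S_i, a_{ik}>0 ∨ a_{ki}>0} p_{ik} |u_i − u_k|`,
`Q_i^+ = −Q_i^- = ∑_{k ∈ S_i} q_{ik} |u_i − u_k|`, hence `P_i^+ ≤ Q_i^+`,
`P_i^- ≥ Q_i^-`, so that `R_i^+ = R_i^- = 1` and `β_{ij} = 0` for every `j ∈ S_i`:
the SMUAS stabilization term vanishes for affine functions. -/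
theorem smuas_linearity_preserving
    (N : ℕ) (u : Fin N → ℝ) (i : Fin N) (S : Finset (Fin N)) (hiS : i ∉ S)
    (a a' p q : Fin N → ℝ)
    (hp0 : ∀ k ∈ S, 0 ≤ p k) (hpq : ∀ k ∈ S, p k ≤ q k)
    (uik : Fin N → ℝ)
    (hsymm : ∀ k ∈ S, u i - uik k = u k - u i)
    (Pp Pm Qp Qm Rp Rm : ℝ)
    (hPp : Pp = ∑ k ∈ S.filter (fun k => 0 < a k ∨ 0 < a' k),
        p k * (max (u i - u k) 0 + max (u i - uik k) 0))
    (hPm : Pm = ∑ k ∈ S.filter (fun k => 0 < a k ∨ 0 < a' k),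
        p k * (min (u i - u k) 0 + min (u i - uik k) 0))
    (hQp : Qp = ∑ k ∈ S, q k * (max (u k - u i) 0 + max (uik k - u i) 0))
    (hQm : Qm = ∑ k ∈ S, q k * (min (u k - u i) 0 + min (uik k - u i) 0))
    (hRp : Rp = if Pp ≠ 0 then min 1 (Qp / Pp) else 1)
    (hRm : Rm = if Pm ≠ 0 then min 1 (Qm / Pm) else 1)
    (β : Fin N → ℝ)
    (hβ : ∀ j ∈ S,
        β j = if u j < u i then 1 - Rp else if u i < u j then 1 - Rm else 0) :
    Pp = ∑ k ∈ S.filter (fun k => 0 < a k ∨ 0 < a' k), p k * |u i - u k| ∧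
    Pm = -∑ k ∈ S.filter (fun k => 0 < a k ∨ 0 < a' k), p k * |u i - u k| ∧
    Qp = ∑ k ∈ S, q k * |u i - u k| ∧
    Qm = -∑ k ∈ S, q k * |u i - u k| ∧
    Pp ≤ Qp ∧ Qm ≤ Pm ∧ Rp = 1 ∧ Rm = 1 ∧ ∀ j ∈ S, β j = 0 := by
  have hmemS : ∀ k ∈ S.filter (fun k => 0 < a k ∨ 0 < a' k), k ∈ S := fun k hk =>
    (Finset.mem_filter.mp hk).1
  have hneg : ∀ k ∈ S, u i - uik k = -(u i - u k) := fun k hk => by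
    rw [hsymm k hk]; ring
  have hnegQ : ∀ k ∈ S, uik k - u i = u i - u k := fun k hk => by
    have := hsymm k hk; linarith
  have hPp' : Pp = ∑ k ∈ S.filter (fun k => 0 < a k ∨ 0 < a' k), p k * |u i - u k| := by
    rw [hPp]
    refine Finset.sum_congr rfl fun k hk => ?_
    rw [hneg k (hmemS k hk), smuas_max_abs]
  have hPm' : Pm = -∑ k ∈ S.filter (fun k => 0 < a k ∨ 0 < a' k), p k * |u i - u k| := by
    rw [hPm, ← Finset.sum_neg_distrib]
    refine Finset.sum_congr rfl fun k hk => ?_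
    rw [hneg k (hmemS k hk), smuas_min_abs]; ring
  have hQp' : Qp = ∑ k ∈ S, q k * |u i - u k| := by
    rw [hQp]
    refine Finset.sum_congr rfl fun k hk => ?_
    rw [hnegQ k hk, show u k - u i = -(u i - u k) by ring, add_comm, smuas_max_abs]
  have hQm' : Qm = -∑ k ∈ S, q k * |u i - u k| := by
    rw [hQm, ← Finset.sum_neg_distrib]
    refine Finset.sum_congr rfl fun k hk => ?_
    rw [hnegQ k hk, show u k - u i = -(u i - u k) by ring, add_comm, smuas_min_abs]; ring
  have hPQ : Pp ≤ Qp := by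
    rw [hPp', hQp']
    calc ∑ k ∈ S.filter (fun k => 0 < a k ∨ 0 < a' k), p k * |u i - u k|
        ≤ ∑ k ∈ S.filter (fun k => 0 < a k ∨ 0 < a' k), q k * |u i - u k| := by
          refine Finset.sum_le_sum fun k hk => ?_
          exact mul_le_mul_of_nonneg_right (hpq k (hmemS k hk)) (abs_nonneg _)
      _ ≤ ∑ k ∈ S, q k * |u i - u k| := by
          refine Finset.sum_le_sum_of_subset_of_nonneg (Finset.filter_subset _ _)
            fun k hk _ => ?_
          exact mul_nonneg ((hp0 k hk).trans (hpq k hk)) (abs_nonneg _)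
  have hPp0 : 0 ≤ Pp := by
    rw [hPp']
    exact Finset.sum_nonneg fun k hk => mul_nonneg (hp0 k (hmemS k hk)) (abs_nonneg _)
  have hQmPm : Qm ≤ Pm := by
    rw [hPm', hQm']
    have : Pp ≤ Qp := hPQ
    rw [hPp'] at this; rw [hQp'] at this; linarith
  have hRp1 : Rp = 1 := by
    rw [hRp]
    split_ifs with h
    · have hpos : 0 < Pp := lt_of_le_of_ne hPp0 (Ne.symm h)
      rw [min_eq_left ((one_le_div hpos).mpr hPQ)]
    · rfl
  have hRm1 : Rm = 1 := by
    rw [hRm]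
    split_ifs with h
    · have hPm0 : Pm ≤ 0 := by rw [hPm']; rw [hPp'] at hPp0; linarith
      have hneg' : Pm < 0 := lt_of_le_of_ne hPm0 h
      have : 1 ≤ Qm / Pm := by
        rw [le_div_iff_of_neg hneg']
        linarith
      rw [min_eq_left this]
    · rfl
  refine ⟨hPp', hPm', hQp', hQm', hPQ, hQmPm, hRp1, hRm1, fun j hj => ?_⟩
  rw [hβ j hj, hRp1, hRm1]
  split_ifs <;> ring
end

section
/- Let a, a' ∈ ℝ with min{a, a'} ≤ 0, let β, β' ∈ [0,1], and set d = −max{a, 0, a'}. Then −max{β a, 0, β' a'} = β d if a' ≤ a, and −max{β a, 0, β' a'} = β' d if a' > a. In other words, under the condition min{a_{ij}, a_{ji}} ≤ 0 the MUAS stabilization entry b_{ij}(U) = −max{β_{ij}(U) a_{ij}, 0, β_{ji}(U) a_{ji}} equals β_{ij}(U) d_{ij} when a_{ji} ≤ a_{ij} and β_{ji}(U) d_{ij} otherwise, where d_{ij} = −max{a_{ij}, 0, a_{ji}} is the standard AFC artificial diffusion coefficient; hence the MUAS method implicitly uses the limiter factor computed at the upwind node of each edge. -/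
/-- The upwind structure of the MUAS stabilization entry: for `a, a' ∈ ℝ` with
`min{a, a'} ≤ 0`, `β, β' ∈ [0,1]` and `d = −max{a, 0, a'}`, one has
`−max{β a, 0, β' a'} = β d` if `a' ≤ a` and `−max{β a, 0, β' a'} = β' d` if `a' > a`;
i.e. under the condition `min{a_{ij}, a_{ji}} ≤ 0` the MUAS entry
`b_{ij}(U) = −max{β_{ij}(U) a_{ij}, 0, β_{ji}(U) a_{ji}}` equals `β_{ij}(U) d_{ij}` when
`a_{ji} ≤ a_{ij}` and `β_{ji}(U) d_{ij}` otherwise, where `d_{ij} = −max{a_{ij}, 0, a_{ji}}`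
is the standard AFC artificial diffusion coefficient. -/
theorem muas_upwind_representation
    (a a' β β' : ℝ) (hmin : min a a' ≤ 0)
    (hβ : β ∈ Set.Icc (0 : ℝ) 1) (hβ' : β' ∈ Set.Icc (0 : ℝ) 1) :
    (a' ≤ a → -max (β * a) (max 0 (β' * a')) = β * -max a (max 0 a')) ∧
    (a < a' → -max (β * a) (max 0 (β' * a')) = β' * -max a (max 0 a')) := by
  obtain ⟨hβ0, hβ1⟩ := hβ
  obtain ⟨hβ'0, hβ'1⟩ := hβ'
  constructor
  · intro h
    have ha' : a' ≤ 0 := by simpa [min_eq_right h] using hmin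
    have hba' : β' * a' ≤ 0 := mul_nonpos_of_nonneg_of_nonpos hβ'0 ha'
    rw [max_eq_left hba', show max a (max 0 a') = max a 0 by rw [max_eq_left ha']]
    rcases le_or_gt a 0 with hle | hlt
    · have : β * a ≤ 0 := mul_nonpos_of_nonneg_of_nonpos hβ0 hle
      rw [max_eq_right this, max_eq_right hle]; ring
    · have : 0 ≤ β * a := mul_nonneg hβ0 hlt.le
      rw [max_eq_left this, max_eq_left hlt.le]; ring
  · intro h
    have ha : a ≤ 0 := by simpa [min_eq_left h.le] using hmin
    have hba : β * a ≤ 0 := mul_nonpos_of_nonneg_of_nonpos hβ0 ha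
    have h1 : max (β * a) (max 0 (β' * a')) = max 0 (β' * a') :=
      max_eq_right (le_trans hba (le_max_left _ _))
    have h2 : max a (max 0 a') = max 0 a' := max_eq_right (le_trans ha (le_max_left _ _))
    rw [h1, h2]
    rcases le_or_gt a' 0 with hle | hlt
    · rw [max_eq_left (mul_nonpos_of_nonneg_of_nonpos hβ'0 hle), max_eq_left hle]; ring
    · rw [max_eq_right (mul_nonneg hβ'0 hlt.le), max_eq_right hlt.le]; ring
end
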